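/- For every T > 0, the integral over ν from 0 to ∞ of B_ν(T) dν equals σT⁴ with σ = π⁴/15 (the rescaled Stefan–Boltzmann law). -/

import Mathlib

open MeasureTheory Real

set_option maxHeartbeats 1000000

lemma bose_hasSum {t : ℝ} (ht : 0 < t) :
    HasSum (fun n : ℕ ↦ (if n = 0 then (0:ℝ) else 1) * rexp (-(n:ℝ) * t))
      (1 / (rexp t - 1)) := by
  have h1 : (1:ℝ) < rexp t := by
    rw [← Real.exp_zero]; exact Real.exp_lt_exp.mpr ht
  set r := rexp (-t) with hr
  have hr0 : 0 ≤ r := (Real.exp_pos _).le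
  have hr1 : r < 1 := by
    rw [hr, Real.exp_lt_one_iff]; linarith
  have hgeo := (hasSum_geometric_of_lt_one hr0 hr1).mul_left r
  have hval : r * (1 - r)⁻¹ = 1 / (rexp t - 1) := by
    rw [hr, Real.exp_neg]
    have he : rexp t ≠ 0 := (Real.exp_pos t).ne'
    field_simp
  rw [hval] at hgeo
  refine (hasSum_nat_add_iff' 1).mp ?_
  have hz : (∑ i ∈ Finset.range 1, (if i = 0 then (0:ℝ) else 1) * rexp (-(i:ℝ) * t)) = 0 := by
    simp
  rw [hz, sub_zero]
  convert hgeo using 1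
  · rfl
  funext n
  simp only [Nat.succ_ne_zero, if_false, one_mul, hr]
  rw [← Real.exp_nat_mul, ← Real.exp_add]
  congr 1
  push_cast
  ring

lemma bose_integral : ∫ x in Set.Ioi (0:ℝ), x ^ 3 / (rexp x - 1) = π ^ 4 / 15 := by
  have h4 : (1:ℝ) < (4:ℂ).re := by norm_num
  have hs : (0:ℝ) < (4:ℂ).re := by norm_num
  set a : ℕ → ℂ := fun n ↦ if n = 0 then 0 else 1 with ha
  set F : ℝ → ℂ := fun t ↦ ((1 / (rexp t - 1) : ℝ) : ℂ) with hF
  have hp : ∀ n : ℕ, a n = 0 ∨ 0 < ((n:ℝ)) := by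
    intro n
    rcases Nat.eq_zero_or_pos n with h | h
    · left; simp [ha, h]
    · right; exact_mod_cast h
  have hFsum : ∀ t ∈ Set.Ioi (0:ℝ), HasSum (fun n : ℕ ↦ a n * ((rexp (-(n:ℝ) * t)) : ℂ)) (F t) := by
    intro t ht
    have h0 := Complex.hasSum_ofReal.mpr (bose_hasSum ht)
    have h2 : (fun n : ℕ ↦ a n * ((rexp (-(n:ℝ) * t)) : ℂ))
        = fun n : ℕ ↦ (((if n = 0 then (0:ℝ) else 1) * rexp (-(n:ℝ) * t) : ℝ) : ℂ) := by
      funext n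
      simp [ha, apply_ite (Complex.ofReal)]
    rw [h2, hF]
    exact h0
  have h_sum : Summable fun n : ℕ ↦ ‖a n‖ / (n:ℝ) ^ (4:ℂ).re := by
    apply Summable.of_nonneg_of_le (fun n ↦ by positivity) (fun n ↦ ?_)
      ((Real.summable_one_div_nat_rpow (p := (4:ℂ).re)).mpr (by norm_num))
    rcases Nat.eq_zero_or_pos n with h | h
    · simp [ha, h]
    · exact le_of_eq (by simp [ha, h.ne'])
  have hmell := hasSum_mellin hp hs (fun t ht ↦ hFsum t ht) h_sum
  have hzeta := zeta_eq_tsum_one_div_nat_cpow h4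
  have hG : Complex.Gamma 4 = 6 := by
    rw [show (4:ℂ) = ((3:ℕ):ℂ) + 1 by norm_num, Complex.Gamma_nat_eq_factorial]
    norm_num [Nat.factorial]
  have hsum_eq : (fun n : ℕ ↦ Complex.Gamma 4 * a n / (n:ℝ) ^ (4:ℂ))
      = fun n : ℕ ↦ (6:ℂ) * (1 / (n:ℂ) ^ (4:ℂ)) := by
    funext n
    rcases Nat.eq_zero_or_pos n with h | h
    · simp [ha, h, Complex.zero_cpow (by norm_num : (4:ℂ) ≠ 0)]
    · simp [ha, h.ne', hG, div_eq_mul_inv, Nat.factorial]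
  rw [hsum_eq] at hmell
  have hmval : mellin F 4 = 6 * riemannZeta 4 := by
    rw [← hmell.tsum_eq, tsum_mul_left, hzeta]
  rw [riemannZeta_four] at hmval
  have hmre : mellin F 4 = ((∫ x in Set.Ioi (0:ℝ), x ^ 3 / (rexp x - 1) : ℝ) : ℂ) := by
    have hre : ∫ t in Set.Ioi (0:ℝ), ((t ^ 3 / (rexp t - 1) : ℝ) : ℂ)
        = ((∫ t in Set.Ioi (0:ℝ), t ^ 3 / (rexp t - 1) : ℝ) : ℂ) := integral_ofReal
    rw [mellin, ← hre]
    refine setIntegral_congr_fun measurableSet_Ioi (fun t ht ↦ ?_)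
    have ht' : (0:ℝ) < t := ht
    rw [smul_eq_mul]
    have hc : (t:ℂ) ^ ((4:ℂ) - 1) = ((t ^ 3 : ℝ) : ℂ) := by
      norm_num
    rw [hc, hF]
    push_cast
    ring
  rw [hmre] at hmval
  have hfin : ((∫ x in Set.Ioi (0:ℝ), x ^ 3 / (rexp x - 1) : ℝ) : ℂ)
      = (((π:ℝ) ^ 4 / 15 : ℝ) : ℂ) := by
    rw [hmval]; push_cast; ring
  exact_mod_cast hfin

/-- The (rescaled) Planck function `B_ν(T) = ν³ / (exp(ν/T) - 1)`. -/
noncomputable def planck (ν T : ℝ) : ℝ := ν ^ 3 / (Real.exp (ν / T) - 1)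

/-- Rescaled Stefan–Boltzmann law: `∫₀^∞ B_ν(T) dν = σ T⁴` with `σ = π⁴/15`. -/
theorem stefan_boltzmann (T : ℝ) (hT : 0 < T) :
    ∫ ν in Set.Ioi (0 : ℝ), planck ν T = (π ^ 4 / 15) * T ^ 4 := by
  have hsub := MeasureTheory.integral_comp_mul_left_Ioi (fun ν ↦ planck ν T) 0 hT
  rw [mul_zero] at hsub
  have heq : (∫ x in Set.Ioi (0:ℝ), planck (T * x) T)
      = T ^ 3 * ∫ x in Set.Ioi (0:ℝ), x ^ 3 / (rexp x - 1) := by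
    rw [← integral_const_mul]
    refine setIntegral_congr_fun measurableSet_Ioi (fun x hx ↦ ?_)
    unfold planck
    rw [mul_div_cancel_left₀ x hT.ne']
    ring
  rw [heq, bose_integral, smul_eq_mul] at hsub
  have hfin : ∫ ν in Set.Ioi (0:ℝ), planck ν T = T * (T ^ 3 * (π ^ 4 / 15)) := by
    rw [hsub, ← mul_assoc, mul_inv_cancel₀ hT.ne', one_mul]
  rw [hfin]
  ring
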